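/- Conditional variance formula for conditionally centered triangle functionals: if f ∈ ℬ_b(S³) satisfies Pf = 0, then for all x ∈ S and n ≥ 0, E_x[(∑_{u∈G_n} f(X_u^△))²] = 2^n Q^n(P(f²))(x). -/
import Mathlib


open MeasureTheory ProbabilityTheory Filter

/-- For `f : S³ → ℝ`, `(Pf)(x) = ∫ f(x,y,z) P(x,dy,dz)`. -/
noncomputable def kerP3 {S : Type*} [MeasurableSpace S]
    (P : ProbabilityTheory.Kernel S (S × S)) (f : S × S × S → ℝ) : S → ℝ :=
  fun x => ∫ yz, f (x, yz.1, yz.2) ∂(P x)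

/-- For `h : S² → ℝ`, `(Ph)(x) = ∫ h(y,z) P(x,dy,dz)`. -/
noncomputable def kerP2 {S : Type*} [MeasurableSpace S]
    (P : ProbabilityTheory.Kernel S (S × S)) (h : S × S → ℝ) : S → ℝ :=
  fun x => ∫ yz, h yz ∂(P x)

/-- First marginal `P₀`. -/
noncomputable def kerP0 {S : Type*} [MeasurableSpace S]
    (P : ProbabilityTheory.Kernel S (S × S)) (f : S → ℝ) : S → ℝ :=
  fun x => ∫ yz, f yz.1 ∂(P x)

/-- Second marginal `P₁`. -/
noncomputable def kerP1 {S : Type*} [MeasurableSpace S]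
    (P : ProbabilityTheory.Kernel S (S × S)) (f : S → ℝ) : S → ℝ :=
  fun x => ∫ yz, f yz.2 ∂(P x)

/-- `Q = (P₀ + P₁)/2`. -/
noncomputable def kerQ {S : Type*} [MeasurableSpace S]
    (P : ProbabilityTheory.Kernel S (S × S)) (f : S → ℝ) : S → ℝ :=
  fun x => (kerP0 P f x + kerP1 P f x) / 2

/-- The triangle kernel `Q^△` acting on functions on `S³`:
`(Q^△ f)(x,x₀,x₁) = (1/2)((P f)(x₀) + (P f)(x₁))`. -/
noncomputable def kerQtri {S : Type*} [MeasurableSpace S]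
    (P : ProbabilityTheory.Kernel S (S × S)) (f : S × S × S → ℝ) : S × S × S → ℝ :=
  fun p => (kerP3 P f p.2.1 + kerP3 P f p.2.2) / 2

/-- `⟨μ^△, f⟩ = ∫ ∫ f(x,x₀,x₁) P(x,dx₀,dx₁) μ(dx)` where `μ^△(dx dx₀ dx₁) = μ(dx)P(x,dx₀,dx₁)`. -/
noncomputable def muTri {S : Type*} [MeasurableSpace S] (μ : MeasureTheory.Measure S)
    (P : ProbabilityTheory.Kernel S (S × S)) (f : S × S × S → ℝ) : ℝ :=
  ∫ x, kerP3 P f x ∂μ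

/-- A bifurcating Markov chain indexed by the binary tree `List Bool`, with kernel `P`,
started at `x` under the law `law x`, satisfying the branching Markov property. -/
structure BMC (S : Type*) [MeasurableSpace S] (Ω : Type*) [MeasurableSpace Ω] where
  P : ProbabilityTheory.Kernel S (S × S)
  markov : ProbabilityTheory.IsMarkovKernel P
  law : S → MeasureTheory.Measure Ω
  prob : ∀ x, MeasureTheory.IsProbabilityMeasure (law x)
  X : List Bool → Ω → S
  meas : ∀ u, Measurable (X u)
  init : ∀ x, MeasureTheory.Measure.map (X []) (law x) = MeasureTheory.Measure.dirac x
  branching : ∀ (x : S) (n : ℕ) (g : (Fin n → Bool) → S × S × S → ℝ),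
    (∀ v, Measurable (g v)) → (∀ v, ∃ C, ∀ p, |g v p| ≤ C) →
    ∀ (H : ({u : List Bool // u.length ≤ n} → S) → ℝ),
      Measurable H → (∃ C, ∀ y, |H y| ≤ C) →
      (∫ ω, H (fun j => X j.1 ω) * ∏ v : Fin n → Bool,
          g v (X (List.ofFn v) ω, X (List.ofFn v ++ [false]) ω, X (List.ofFn v ++ [true]) ω)
          ∂(law x))
      = ∫ ω, H (fun j => X j.1 ω) * ∏ v : Fin n → Bool,
          (∫ yz, g v (X (List.ofFn v) ω, yz.1, yz.2) ∂(P (X (List.ofFn v) ω)))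
          ∂(law x)

/-- The mother-daughters triangle `X_u^△ = (X_u, X_{u0}, X_{u1})`. -/
def BMC.tri {S : Type*} [MeasurableSpace S] {Ω : Type*} [MeasurableSpace Ω]
    (B : BMC S Ω) (u : List Bool) (ω : Ω) : S × S × S :=
  (B.X u ω, B.X (u ++ [false]) ω, B.X (u ++ [true]) ω)

section Auxiliary

open MeasureTheory ProbabilityTheory

variable {S : Type*} [MeasurableSpace S] {Ω : Type*} [MeasurableSpace Ω]

lemma integrable_of_abs_le {O : Type*} [MeasurableSpace O] (μ : Measure O)
    [IsProbabilityMeasure μ] {g : O → ℝ} (hm : Measurable g) (C : ℝ)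
    (hb : ∀ ω, |g ω| ≤ C) : Integrable g μ :=
  ⟨hm.aestronglyMeasurable,
    HasFiniteIntegral.of_bounded (C := C) (ae_of_all _ (by simpa [Real.norm_eq_abs] using hb))⟩

lemma abs_integral_le {O : Type*} [MeasurableSpace O] (μ : Measure O)
    [IsProbabilityMeasure μ] {g : O → ℝ} {C : ℝ} (hb : ∀ ω, |g ω| ≤ C) :
    |∫ ω, g ω ∂μ| ≤ C := by
  simpa [Real.norm_eq_abs] using
    norm_integral_le_of_norm_le_const (μ := μ) (f := g) (C := C)
      (ae_of_all _ (by simpa [Real.norm_eq_abs] using hb))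

lemma kerP3_measurable (P : Kernel S (S × S)) [IsSFiniteKernel P] {f : S × S × S → ℝ}
    (hf : Measurable f) : Measurable (kerP3 P f) := by
  have h : Measurable fun q : S × (S × S) => f (q.1, q.2.1, q.2.2) := by fun_prop
  exact (h.stronglyMeasurable.integral_kernel_prod_right').measurable

lemma kerP3_abs_le (P : Kernel S (S × S)) [IsMarkovKernel P] {f : S × S × S → ℝ} {C : ℝ}
    (hb : ∀ p, |f p| ≤ C) : ∀ x, |kerP3 P f x| ≤ C :=
  fun x => abs_integral_le (P x) (fun _ => hb _)

lemma kerQ_measurable (P : Kernel S (S × S)) [IsSFiniteKernel P] {h : S → ℝ}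
    (hm : Measurable h) : Measurable (kerQ P h) := by
  have h0 : Measurable (kerP0 P h) := by
    have : Measurable fun q : S × (S × S) => h q.2.1 := by fun_prop
    exact (this.stronglyMeasurable.integral_kernel_prod_right').measurable
  have h1 : Measurable (kerP1 P h) := by
    have : Measurable fun q : S × (S × S) => h q.2.2 := by fun_prop
    exact (this.stronglyMeasurable.integral_kernel_prod_right').measurable
  exact (h0.add h1).div_const 2

lemma kerQ_abs_le (P : Kernel S (S × S)) [IsMarkovKernel P] {h : S → ℝ} {C : ℝ}
    (hb : ∀ y, |h y| ≤ C) : ∀ x, |kerQ P h x| ≤ C := by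
  intro x
  have h0 : |kerP0 P h x| ≤ C := abs_integral_le (P x) (fun _ => hb _)
  have h1 : |kerP1 P h x| ≤ C := abs_integral_le (P x) (fun _ => hb _)
  have h2 := (abs_add_le (kerP0 P h x) (kerP1 P h x)).trans (add_le_add h0 h1)
  calc |kerQ P h x| = |kerP0 P h x + kerP1 P h x| / 2 := by
        simp [kerQ, abs_div]
    _ ≤ (C + C) / 2 := by linarith
    _ = C := by ring

lemma ofFn_snoc {n : ℕ} (v : Fin n → Bool) (b : Bool) :
    List.ofFn (Fin.snoc v b) = List.ofFn v ++ [b] := by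
  rw [List.ofFn_succ']
  simp [List.concat_eq_append]

/-- One-site conditioning: `E_x[g(X_v^△)] = E_x[(Pg)(X_v)]`. -/
lemma BMC.single (B : BMC S Ω) (x : S) (n : ℕ) (v : Fin n → Bool)
    (g : S × S × S → ℝ) (hgm : Measurable g) (C : ℝ) (hgb : ∀ p, |g p| ≤ C) :
    ∫ ω, g (B.tri (List.ofFn v) ω) ∂(B.law x)
      = ∫ ω, kerP3 B.P g (B.X (List.ofFn v) ω) ∂(B.law x) := by
  haveI := B.markov
  set g' : (Fin n → Bool) → S × S × S → ℝ := fun w p => if w = v then g p else 1 with hg'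
  have hm : ∀ w, Measurable (g' w) := by
    intro w
    by_cases h : w = v <;> simp only [hg', h, if_true, if_false]
    · exact hgm
    · exact measurable_const
  have hb : ∀ w, ∃ D, ∀ p, |g' w p| ≤ D := by
    intro w
    by_cases h : w = v <;> simp only [hg', h, if_true, if_false]
    · exact ⟨C, hgb⟩
    · exact ⟨1, fun _ => by simp⟩
  have key := B.branching x n g' hm hb (fun _ => 1) measurable_const
    ⟨1, fun _ => by simp⟩
  have L : ∫ ω, g (B.tri (List.ofFn v) ω) ∂(B.law x)
      = ∫ ω, (1 : ℝ) * ∏ w : Fin n → Bool,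
          g' w (B.X (List.ofFn w) ω, B.X (List.ofFn w ++ [false]) ω,
            B.X (List.ofFn w ++ [true]) ω) ∂(B.law x) := by
    refine integral_congr_ae (ae_of_all _ fun ω => ?_)
    dsimp only
    rw [one_mul]
    simp only [hg']
    rw [Finset.prod_ite_eq', if_pos (Finset.mem_univ v)]
    rfl
  have hker : ∀ (w : Fin n → Bool) (y : S),
      (∫ yz, g' w (y, yz.1, yz.2) ∂(B.P y)) = if w = v then kerP3 B.P g y else 1 := by
    intro w y
    by_cases h : w = v <;> simp only [hg', h, if_true, if_false]
    · rfl
    · simp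
  have R : ∫ ω, (1 : ℝ) * ∏ w : Fin n → Bool,
        (∫ yz, g' w (B.X (List.ofFn w) ω, yz.1, yz.2) ∂(B.P (B.X (List.ofFn w) ω)))
        ∂(B.law x)
      = ∫ ω, kerP3 B.P g (B.X (List.ofFn v) ω) ∂(B.law x) := by
    refine integral_congr_ae (ae_of_all _ fun ω => ?_)
    dsimp only
    rw [one_mul]
    calc (∏ w : Fin n → Bool,
          (∫ yz, g' w (B.X (List.ofFn w) ω, yz.1, yz.2) ∂(B.P (B.X (List.ofFn w) ω))))
        = ∏ w : Fin n → Bool,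
            (if w = v then kerP3 B.P g (B.X (List.ofFn w) ω) else 1) :=
          Finset.prod_congr rfl fun w _ => hker w _
      _ = kerP3 B.P g (B.X (List.ofFn v) ω) := by
          rw [Finset.prod_ite_eq', if_pos (Finset.mem_univ v)]
  exact L.trans (key.trans R)

lemma kerP3_add_marg (P : Kernel S (S × S)) [IsMarkovKernel P] {h : S → ℝ}
    (hm : Measurable h) {C : ℝ} (hb : ∀ y, |h y| ≤ C) (y : S) :
    kerP3 P (fun p => h p.2.1 + h p.2.2) y = 2 * kerQ P h y := by
  have i1 : Integrable (fun yz : S × S => h yz.1) (P y) :=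
    integrable_of_abs_le _ (hm.comp measurable_fst) C (fun _ => hb _)
  have i2 : Integrable (fun yz : S × S => h yz.2) (P y) :=
    integrable_of_abs_le _ (hm.comp measurable_snd) C (fun _ => hb _)
  have : kerP3 P (fun p => h p.2.1 + h p.2.2) y
      = (∫ yz, h yz.1 ∂(P y)) + ∫ yz, h yz.2 ∂(P y) := integral_add i1 i2
  rw [this]
  simp only [kerQ, kerP0, kerP1]
  ring

/-- Sum over a generation: `E_x[∑_{u∈G_n} h(X_u)] = 2^n (Q^n h)(x)`. -/
lemma BMC.gen_sum (B : BMC S Ω) (x : S) :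
    ∀ (n : ℕ) (h : S → ℝ), Measurable h → ∀ C : ℝ, (∀ y, |h y| ≤ C) →
    ∫ ω, (∑ u : Fin n → Bool, h (B.X (List.ofFn u) ω)) ∂(B.law x)
      = 2 ^ n * (kerQ B.P)^[n] h x := by
  intro n
  induction n with
  | zero =>
    intro h hm C hb
    haveI := B.prob x
    have h1 : ∀ ω, (∑ u : Fin 0 → Bool, h (B.X (List.ofFn u) ω)) = h (B.X [] ω) := by
      intro ω
      rw [Finset.univ_unique, Finset.sum_singleton, List.ofFn_zero]
    rw [integral_congr_ae (ae_of_all _ h1)]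
    have h2 := integral_map (μ := B.law x) (φ := B.X []) (B.meas []).aemeasurable
      (f := h) hm.aestronglyMeasurable
    rw [← h2, B.init x, integral_dirac' h x hm.stronglyMeasurable]
    simp
  | succ n IH =>
    intro h hm C hb
    haveI := B.prob x
    haveI := B.markov
    have reidx : ∀ ω, (∑ u : Fin (n + 1) → Bool, h (B.X (List.ofFn u) ω))
        = ∑ v : Fin n → Bool,
            (h (B.X (List.ofFn v ++ [false]) ω) + h (B.X (List.ofFn v ++ [true]) ω)) := by
      intro ω
      rw [← (Fin.snocEquiv (fun _ => Bool)).sum_comp, Fintype.sum_prod_type]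
      simp only [Fin.snocEquiv, Equiv.coe_fn_mk]
      rw [Fintype.sum_bool, ← Finset.sum_add_distrib]
      refine Finset.sum_congr rfl fun v _ => ?_
      simp only [ofFn_snoc]
      ring
    rw [integral_congr_ae (ae_of_all _ reidx)]
    have hintg : ∀ (u : List Bool) (g : S → ℝ), Measurable g → ∀ D : ℝ, (∀ y, |g y| ≤ D) →
        Integrable (fun ω => g (B.X u ω)) (B.law x) :=
      fun u g hg D hD => integrable_of_abs_le _ (hg.comp (B.meas u)) D (fun _ => hD _)
    rw [integral_finset_sum (μ := B.law x)
      (f := fun (v : Fin n → Bool) ω =>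
        h (B.X (List.ofFn v ++ [false]) ω) + h (B.X (List.ofFn v ++ [true]) ω))
      Finset.univ
      (fun v _ => Integrable.add (hintg _ h hm C hb) (hintg _ h hm C hb))]
    have step : ∀ v : Fin n → Bool,
        ∫ ω, (h (B.X (List.ofFn v ++ [false]) ω) + h (B.X (List.ofFn v ++ [true]) ω))
          ∂(B.law x)
        = ∫ ω, 2 * kerQ B.P h (B.X (List.ofFn v) ω) ∂(B.law x) := by
      intro v
      have hone := B.single x n v (fun p => h p.2.1 + h p.2.2)
        (by fun_prop) (C + C)
        (fun p => (abs_add_le _ _).trans (add_le_add (hb _) (hb _)))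
      have e1 : (fun ω => h (B.X (List.ofFn v ++ [false]) ω)
          + h (B.X (List.ofFn v ++ [true]) ω))
          = fun ω => (fun p : S × S × S => h p.2.1 + h p.2.2) (B.tri (List.ofFn v) ω) := rfl
      have e2 : kerP3 B.P (fun p : S × S × S => h p.2.1 + h p.2.2)
          = fun y => 2 * kerQ B.P h y := funext (kerP3_add_marg B.P hm hb)
      rw [e1]
      rw [e2] at hone
      exact hone
    rw [Finset.sum_congr rfl (fun v _ => step v)]
    have hQm : Measurable (kerQ B.P h) := kerQ_measurable B.P hm
    have hQb : ∀ y, |kerQ B.P h y| ≤ C := kerQ_abs_le B.P hb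
    have e3 : ∀ v : Fin n → Bool,
        ∫ ω, 2 * kerQ B.P h (B.X (List.ofFn v) ω) ∂(B.law x)
        = 2 * ∫ ω, kerQ B.P h (B.X (List.ofFn v) ω) ∂(B.law x) :=
      fun v => integral_const_mul 2 _
    rw [Finset.sum_congr rfl (fun v _ => e3 v), ← Finset.mul_sum,
      ← integral_finset_sum (μ := B.law x)
        (f := fun (v : Fin n → Bool) ω => kerQ B.P h (B.X (List.ofFn v) ω))
        Finset.univ (fun v _ => hintg _ _ hQm C hQb),
      IH (kerQ B.P h) hQm C hQb, Function.iterate_succ_apply]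
    ring

/-- Two-site conditioning for conditionally centered `f`. -/
lemma BMC.pair (B : BMC S Ω) (x : S) (n : ℕ) (f : S × S × S → ℝ) (hfm : Measurable f)
    (C : ℝ) (hfb : ∀ p, |f p| ≤ C) (hPf : ∀ y, kerP3 B.P f y = 0) (u v : Fin n → Bool) :
    ∫ ω, f (B.tri (List.ofFn u) ω) * f (B.tri (List.ofFn v) ω) ∂(B.law x)
      = if u = v then
          ∫ ω, kerP3 B.P (fun p => (f p) ^ 2) (B.X (List.ofFn u) ω) ∂(B.law x)
        else 0 := by
  haveI := B.markov
  haveI := B.prob x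
  set g' : (Fin n → Bool) → S × S × S → ℝ :=
    fun w p => (if w = u then f p else 1) * (if w = v then f p else 1) with hg'
  have hm : ∀ w, Measurable (g' w) := by
    intro w
    refine Measurable.mul ?_ ?_
    · by_cases h : w = u <;> simp only [h, if_true, if_false]
      exacts [hfm, measurable_const]
    · by_cases h : w = v <;> simp only [h, if_true, if_false]
      exacts [hfm, measurable_const]
  have hfac : ∀ (c : Prop) [Decidable c] (p : S × S × S),
      |(if c then f p else 1)| ≤ max C 1 := by
    intro c _ p
    split
    · exact le_max_of_le_left (hfb p)
    · simp
  have hb : ∀ w, ∃ D, ∀ p, |g' w p| ≤ D := by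
    intro w
    refine ⟨max C 1 * max C 1, fun p => ?_⟩
    rw [hg', abs_mul]
    exact mul_le_mul (hfac _ p) (hfac _ p) (abs_nonneg _)
      ((abs_nonneg _).trans (hfac (w = u) p))
  have key := B.branching x n g' hm hb (fun _ => 1) measurable_const
    ⟨1, fun _ => by simp⟩
  have L : ∫ ω, f (B.tri (List.ofFn u) ω) * f (B.tri (List.ofFn v) ω) ∂(B.law x)
      = ∫ ω, (1 : ℝ) * ∏ w : Fin n → Bool,
          g' w (B.X (List.ofFn w) ω, B.X (List.ofFn w ++ [false]) ω,
            B.X (List.ofFn w ++ [true]) ω) ∂(B.law x) := by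
    refine integral_congr_ae (ae_of_all _ fun ω => ?_)
    dsimp only
    rw [one_mul]
    simp only [hg']
    rw [Finset.prod_mul_distrib, Finset.prod_ite_eq', Finset.prod_ite_eq',
      if_pos (Finset.mem_univ u), if_pos (Finset.mem_univ v)]
    rfl
  have hker : ∀ (w : Fin n → Bool) (y : S),
      (∫ yz, g' w (y, yz.1, yz.2) ∂(B.P y))
        = if w = u then (if w = v then kerP3 B.P (fun p => (f p) ^ 2) y else 0)
          else if w = v then 0 else 1 := by
    intro w y
    by_cases h1 : w = u
    · subst h1
      by_cases h2 : w = v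
      · subst h2
        simp only [hg', eq_self_iff_true, if_true]
        simp only [kerP3, pow_two]
      · simp only [hg', eq_self_iff_true, if_true, if_neg h2, mul_one]
        exact hPf y
    · by_cases h2 : w = v
      · subst h2
        simp only [hg', eq_self_iff_true, if_true, if_neg h1, one_mul]
        exact hPf y
      · simp only [hg', if_neg h1, if_neg h2, one_mul]
        simp
  have R : ∫ ω, (1 : ℝ) * ∏ w : Fin n → Bool,
        (∫ yz, g' w (B.X (List.ofFn w) ω, yz.1, yz.2) ∂(B.P (B.X (List.ofFn w) ω)))
        ∂(B.law x)
      = if u = v then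
          ∫ ω, kerP3 B.P (fun p => (f p) ^ 2) (B.X (List.ofFn u) ω) ∂(B.law x)
        else 0 := by
    by_cases huv : u = v
    · subst huv
      rw [if_pos rfl]
      refine integral_congr_ae (ae_of_all _ fun ω => ?_)
      dsimp only
      rw [one_mul]
      calc (∏ w : Fin n → Bool,
            (∫ yz, g' w (B.X (List.ofFn w) ω, yz.1, yz.2) ∂(B.P (B.X (List.ofFn w) ω))))
          = ∏ w : Fin n → Bool,
              (if w = u then kerP3 B.P (fun p => (f p) ^ 2) (B.X (List.ofFn w) ω) else 1) := by
            refine Finset.prod_congr rfl fun w _ => ?_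
            rw [hker w]
            by_cases h : w = u <;> simp [h]
        _ = kerP3 B.P (fun p => (f p) ^ 2) (B.X (List.ofFn u) ω) := by
            rw [Finset.prod_ite_eq', if_pos (Finset.mem_univ u)]
    · rw [if_neg huv]
      have hz : ∀ ω, (1 : ℝ) * ∏ w : Fin n → Bool,
          (∫ yz, g' w (B.X (List.ofFn w) ω, yz.1, yz.2) ∂(B.P (B.X (List.ofFn w) ω))) = 0 := by
        intro ω
        rw [one_mul]
        refine Finset.prod_eq_zero (Finset.mem_univ u) ?_
        rw [hker u]
        simp [huv]
      rw [integral_congr_ae (ae_of_all _ hz)]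
      simp
  exact L.trans (key.trans R)

end Auxiliary

/-- Conditional variance formula for conditionally centered triangle functionals:
if `Pf = 0`, then `E_x[(∑_{u∈G_n} f(X_u^△))²] = 2^n Q^n(P(f²))(x)`. -/
theorem variance_conditionally_centered {S : Type*} [MeasurableSpace S]
    {Ω : Type*} [MeasurableSpace Ω] (B : BMC S Ω)
    (f : S × S × S → ℝ) (hfm : Measurable f) (hfb : ∃ C, ∀ p, |f p| ≤ C)
    (hPf : ∀ y, kerP3 B.P f y = 0) (x : S) (n : ℕ) :
    ∫ ω, (∑ u : Fin n → Bool, f (B.tri (List.ofFn u) ω)) ^ 2 ∂(B.law x)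
      = 2 ^ n * (kerQ B.P)^[n] (kerP3 B.P (fun p => (f p) ^ 2)) x := by
  obtain ⟨C, hfb⟩ := hfb
  haveI := B.prob x
  haveI := B.markov
  have hC0 : 0 ≤ C := le_trans (abs_nonneg _) (hfb (x, x, x))
  have htri : ∀ u : List Bool, Measurable (B.tri u) :=
    fun u => (B.meas u).prodMk ((B.meas _).prodMk (B.meas _))
  have hint : ∀ u v : Fin n → Bool,
      Integrable (fun ω => f (B.tri (List.ofFn u) ω) * f (B.tri (List.ofFn v) ω))
        (B.law x) := by
    intro u v
    refine integrable_of_abs_le _ ((hfm.comp (htri _)).mul (hfm.comp (htri _))) (C * C)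
      (fun ω => ?_)
    rw [abs_mul]
    exact mul_le_mul (hfb _) (hfb _) (abs_nonneg _) hC0
  have expand : ∀ ω, (∑ u : Fin n → Bool, f (B.tri (List.ofFn u) ω)) ^ 2
      = ∑ u : Fin n → Bool, ∑ v : Fin n → Bool,
          f (B.tri (List.ofFn u) ω) * f (B.tri (List.ofFn v) ω) := by
    intro ω; rw [sq, Finset.sum_mul_sum]
  rw [integral_congr_ae (ae_of_all _ expand)]
  rw [integral_finset_sum (μ := B.law x)
    (f := fun (u : Fin n → Bool) ω => ∑ v : Fin n → Bool,
      f (B.tri (List.ofFn u) ω) * f (B.tri (List.ofFn v) ω)) Finset.univ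
    (fun u _ => integrable_finset_sum _ (fun v _ => hint u v))]
  have h1 : ∀ u : Fin n → Bool,
      ∫ ω, (∑ v : Fin n → Bool, f (B.tri (List.ofFn u) ω) * f (B.tri (List.ofFn v) ω))
        ∂(B.law x)
      = ∫ ω, kerP3 B.P (fun p => (f p) ^ 2) (B.X (List.ofFn u) ω) ∂(B.law x) := by
    intro u
    rw [integral_finset_sum (μ := B.law x)
      (f := fun (v : Fin n → Bool) ω =>
        f (B.tri (List.ofFn u) ω) * f (B.tri (List.ofFn v) ω)) Finset.univ
      (fun v _ => hint u v)]
    rw [Finset.sum_congr rfl (fun v _ => B.pair x n f hfm C hfb hPf u v)]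
    rw [Finset.sum_ite_eq]
    simp
  rw [Finset.sum_congr rfl (fun u _ => h1 u)]
  have hb2 : ∀ p, |(f p) ^ 2| ≤ C * C := by
    intro p
    rw [abs_pow]
    calc |f p| ^ 2 ≤ C ^ 2 := pow_le_pow_left₀ (abs_nonneg _) (hfb p) 2
      _ = C * C := by ring
  have h2m : Measurable fun p => (f p) ^ 2 := hfm.pow_const 2
  have hker3m := kerP3_measurable B.P h2m
  have hker3b := kerP3_abs_le B.P hb2
  rw [← integral_finset_sum (μ := B.law x)
    (f := fun (u : Fin n → Bool) ω => kerP3 B.P (fun p => (f p) ^ 2) (B.X (List.ofFn u) ω))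
    Finset.univ
    (fun u _ => integrable_of_abs_le _ (hker3m.comp (B.meas _)) (C * C) (fun ω => hker3b _))]
  exact B.gen_sum x n _ hker3m (C * C) hker3b
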